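/- arXiv:1406.3796 — 2 statements merged into one kernel-verified Lean document; each statement's English description precedes it below -/
import Mathlib

section
/- For every perfect matching M of a graph G with maximum degree Δ, af(G,M) ≤ (Δ−1)·f(G,M). -/
open SimpleGraph

variable {V : Type*}

/-- A closed walk is an `M`-alternating cycle: it is a cycle and its edges alternate
(cyclically) between `M` and the complement of `M`. -/
def SimpleGraph.IsAltCycle (G : SimpleGraph V) (M : Set (Sym2 V)) {v : V} (c : G.Walk v v) :
    Prop :=
  c.IsCycle ∧ List.Chain' (fun e f => (e ∈ M ↔ f ∉ M)) c.edges ∧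
    ∀ e f, c.edges.head? = some e → c.edges.getLast? = some f → (f ∈ M ↔ e ∉ M)

/-- `S` is a forcing set of the perfect matching `M`: `S ⊆ M` and `M` is the unique
perfect matching of `G` containing `S`. -/
def SimpleGraph.IsForcingSet (G : SimpleGraph V) (M : G.Subgraph) (S : Set (Sym2 V)) : Prop :=
  S ⊆ M.edgeSet ∧ ∀ N : G.Subgraph, N.IsPerfectMatching → S ⊆ N.edgeSet → N = M

/-- `S` is an anti-forcing set of the perfect matching `M`: `S` consists of edges of `G`
not in `M`, and `M` is the unique perfect matching of `G - S` (equivalently, the unique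
perfect matching of `G` whose edge set avoids `S`). -/
def SimpleGraph.IsAntiForcingSet (G : SimpleGraph V) (M : G.Subgraph) (S : Set (Sym2 V)) :
    Prop :=
  S ⊆ G.edgeSet \ M.edgeSet ∧
    ∀ N : G.Subgraph, N.IsPerfectMatching → Disjoint N.edgeSet S → N = M

/-- The forcing number `f(G,M)`. -/
noncomputable def SimpleGraph.forcingNum (G : SimpleGraph V) (M : G.Subgraph) : ℕ :=
  sInf {n | ∃ S : Set (Sym2 V), G.IsForcingSet M S ∧ S.ncard = n}

/-- The anti-forcing number `af(G,M)`. -/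
noncomputable def SimpleGraph.antiForcingNum (G : SimpleGraph V) (M : G.Subgraph) : ℕ :=
  sInf {n | ∃ S : Set (Sym2 V), G.IsAntiForcingSet M S ∧ S.ncard = n}

/-!
Take a minimum forcing set `S` of `M` and, for each `e ∈ S`, delete every other edge at one
endpoint `v` of `e`: at most `Δ - 1` edges per `e`, none of them in `M` because `M` is a matching.
A perfect matching avoiding the deleted edges must cover `v` by `e`, so it contains `S` and hence
equals `M`.
-/

namespace SimpleGraph

variable {G : SimpleGraph V}

lemma Subgraph.IsPerfectMatching.eq_of_edgeSet_subset {M N : G.Subgraph}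
    (hM : M.IsPerfectMatching) (hN : N.IsPerfectMatching) (h : M.edgeSet ⊆ N.edgeSet) :
    N = M := by
  rw [Subgraph.isPerfectMatching_iff] at hM hN
  ext v w
  · simp [M.edge_vert (hM v).exists.choose_spec, N.edge_vert (hN v).exists.choose_spec]
  · have hMN {v w : V} (hvw : M.Adj v w) : N.Adj v w := h (M.mem_edgeSet.2 hvw)
    refine ⟨fun hvw => ?_, hMN⟩
    obtain ⟨w', hvw', -⟩ := hM v
    rwa [(hN v).unique hvw (hMN hvw')]

lemma Subgraph.IsMatching.eq_of_mem_edgeSet_of_mem {M : G.Subgraph} (hM : M.IsMatching)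
    {v : V} {e f : Sym2 V} (he : e ∈ M.edgeSet) (hf : f ∈ M.edgeSet) (hve : v ∈ e)
    (hvf : v ∈ f) : e = f := by
  rw [← Sym2.other_spec hve] at he ⊢
  rw [← Sym2.other_spec hvf] at hf ⊢
  exact congrArg (s(v, ·)) (hM.eq_of_adj_left he hf)

lemma Subgraph.IsPerfectMatching.exists_mem_edgeSet_mem {M : G.Subgraph}
    (hM : M.IsPerfectMatching) (v : V) : ∃ e ∈ M.edgeSet, v ∈ e := by
  obtain ⟨w, hvw, -⟩ := hM.1 (hM.2 v)
  exact ⟨s(v, w), hvw, Sym2.mem_mk_left v w⟩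

lemma Subgraph.IsPerfectMatching.isForcingSet_edgeSet {M : G.Subgraph}
    (hM : M.IsPerfectMatching) : G.IsForcingSet M M.edgeSet :=
  ⟨subset_rfl, fun _ hN h => hM.eq_of_edgeSet_subset hN h⟩

lemma exists_isForcingSet_ncard_eq_forcingNum {M : G.Subgraph} (hM : M.IsPerfectMatching) :
    ∃ S, G.IsForcingSet M S ∧ S.ncard = G.forcingNum M :=
  Nat.sInf_mem (s := {n | ∃ S, G.IsForcingSet M S ∧ S.ncard = n})
    ⟨_, M.edgeSet, hM.isForcingSet_edgeSet, rfl⟩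

lemma antiForcingNum_le_ncard {M : G.Subgraph} {S : Set (Sym2 V)}
    (hS : G.IsAntiForcingSet M S) : G.antiForcingNum M ≤ S.ncard :=
  Nat.sInf_le ⟨S, hS, rfl⟩

/-- Any choice of endpoints works; `Sym2.out` fixes one. -/
def otherEdgesAtEndpoints (G : SimpleGraph V) (S : Set (Sym2 V)) : Set (Sym2 V) :=
  ⋃ e ∈ S, G.incidenceSet e.out.1 \ {e}

lemma otherEdgesAtEndpoints_subset {M : G.Subgraph} (hM : M.IsMatching) {S : Set (Sym2 V)}
    (hS : S ⊆ M.edgeSet) : G.otherEdgesAtEndpoints S ⊆ G.edgeSet \ M.edgeSet := by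
  simp only [otherEdgesAtEndpoints, Set.iUnion_subset_iff]
  rintro e he f ⟨⟨hfG, hvf⟩, hfe⟩
  exact ⟨hfG, fun hfM => hfe (hM.eq_of_mem_edgeSet_of_mem hfM (hS he) hvf (Sym2.out_fst_mem e))⟩

lemma IsForcingSet.isAntiForcingSet_otherEdgesAtEndpoints {M : G.Subgraph}
    (hM : M.IsMatching) {S : Set (Sym2 V)} (hS : G.IsForcingSet M S) :
    G.IsAntiForcingSet M (G.otherEdgesAtEndpoints S) := by
  refine ⟨otherEdgesAtEndpoints_subset hM hS.1, fun N hN hdisj => hS.2 N hN fun e he => ?_⟩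
  obtain ⟨f, hfN, hvf⟩ := hN.exists_mem_edgeSet_mem e.out.1
  have hfe : f = e := by
    by_contra hfe
    exact Set.disjoint_left.1 hdisj hfN (Set.mem_biUnion he ⟨⟨N.edgeSet_subset hfN, hvf⟩, hfe⟩)
  exact hfe ▸ hfN

lemma ncard_incidenceSet_eq_degree [Fintype V] [DecidableRel G.Adj] (v : V) :
    (G.incidenceSet v).ncard = G.degree v := by
  classical
  rw [← coe_incidenceFinset, Set.ncard_coe_finset, card_incidenceFinset_eq_degree]

lemma ncard_incidenceSet_diff_singleton_le [Fintype V] [DecidableRel G.Adj] {v : V}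
    {e : Sym2 V} (he : e ∈ G.incidenceSet v) :
    (G.incidenceSet v \ {e}).ncard ≤ G.maxDegree - 1 := by
  rw [Set.ncard_sdiff_singleton_of_mem he, ncard_incidenceSet_eq_degree]
  exact Nat.sub_le_sub_right (G.degree_le_maxDegree v) 1

lemma ncard_otherEdgesAtEndpoints_le [Fintype V] [DecidableRel G.Adj] {S : Set (Sym2 V)}
    (hS : S ⊆ G.edgeSet) : (G.otherEdgesAtEndpoints S).ncard ≤ (G.maxDegree - 1) * S.ncard := by
  classical
  set T := S.toFinite.toFinset
  have hST : G.otherEdgesAtEndpoints S = ⋃ e ∈ T, G.incidenceSet e.out.1 \ {e} := by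
    simp [otherEdgesAtEndpoints, T]
  calc (G.otherEdgesAtEndpoints S).ncard
      ≤ ∑ e ∈ T, (G.incidenceSet e.out.1 \ {e}).ncard := hST ▸ T.set_ncard_biUnion_le _
    _ ≤ ∑ _e ∈ T, (G.maxDegree - 1) := Finset.sum_le_sum fun e he =>
        ncard_incidenceSet_diff_singleton_le ⟨hS (S.toFinite.mem_toFinset.1 he), Sym2.out_fst_mem e⟩
    _ = (G.maxDegree - 1) * S.ncard := by
        rw [Finset.sum_const, smul_eq_mul, mul_comm, Set.ncard_eq_toFinset_card S]

end SimpleGraph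

/-- For every perfect matching `M` of a graph `G` with maximum degree `Δ`,
`af(G,M) ≤ (Δ−1)·f(G,M)`. -/
theorem antiforcing_le_maxDegree_mul_forcing (G : SimpleGraph V) [Fintype V]
    [DecidableRel G.Adj] (M : G.Subgraph) (hM : M.IsPerfectMatching) :
    G.antiForcingNum M ≤ (G.maxDegree - 1) * G.forcingNum M := by
  obtain ⟨S, hS, hcard⟩ := exists_isForcingSet_ncard_eq_forcingNum hM
  calc G.antiForcingNum M
      ≤ (G.otherEdgesAtEndpoints S).ncard :=
        antiForcingNum_le_ncard (hS.isAntiForcingSet_otherEdgesAtEndpoints hM.1)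
    _ ≤ (G.maxDegree - 1) * S.ncard := ncard_otherEdgesAtEndpoints_le (hS.1.trans M.edgeSet_subset)
    _ = (G.maxDegree - 1) * G.forcingNum M := by rw [hcard]
end

section
/- For any perfect matching M of a graph G, the anti-forcing number af(G,M) is at least c'(M), the maximum size of a compatible M-alternating set of G. -/
open SimpleGraph

variable {V : Type*}

/-- Two cycles are compatible w.r.t. `M`: every common edge lies in `M` and every common
vertex lies on a common edge belonging to `M` (so the cycles are disjoint or intersect
only at edges in `M`). -/
def SimpleGraph.CompatCycles (G : SimpleGraph V) (M : Set (Sym2 V)) {v w : V}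
    (c : G.Walk v v) (d : G.Walk w w) : Prop :=
  (∀ e, e ∈ c.edges → e ∈ d.edges → e ∈ M) ∧
  (∀ x, x ∈ c.support → x ∈ d.support → ∃ e ∈ M, e ∈ c.edges ∧ e ∈ d.edges ∧ x ∈ e)

/-- `c'(M)`: the maximum cardinality of a compatible `M`-alternating set of cycles. -/
noncomputable def SimpleGraph.compatNum (G : SimpleGraph V) (M : G.Subgraph) : ℕ :=
  sSup {n | ∃ f : Fin n → Σ v : V, G.Walk v v,
    (∀ i, G.IsAltCycle M.edgeSet (f i).2) ∧
    ∀ i j, i ≠ j → G.CompatCycles M.edgeSet (f i).2 (f j).2}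


/-!
Take an anti-forcing set `S` of minimum size. Every `M`-alternating cycle `C` contains an edge
of `S`: otherwise `M ∆ C` would be a perfect matching of `G - S` different from `M`. Edges of `S`
lie outside `M`, while two compatible cycles share only edges of `M`, so choosing one edge of `S`
on each cycle of a compatible family is injective.
-/

open scoped symmDiff

namespace SimpleGraph

variable {G : SimpleGraph V}

namespace Walk

variable {u : V} {c : G.Walk u u}

lemma IsCycle.getVert_eq_getVert_iff (hc : c.IsCycle) {i j : ℕ} (hi : i ≤ c.length)
    (hj : j ≤ c.length) :
    c.getVert i = c.getVert j ↔
      i = j ∨ (i = 0 ∧ j = c.length) ∨ (i = c.length ∧ j = 0) := by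
  refine ⟨fun h => ?_, by rintro (rfl | ⟨rfl, rfl⟩ | ⟨rfl, rfl⟩) <;> simp⟩
  rcases Nat.eq_zero_or_pos i with rfl | hi0
  · rw [c.getVert_zero, eq_comm, hc.getVert_endpoint_iff hj] at h
    omega
  rcases Nat.eq_zero_or_pos j with rfl | hj0
  · rw [c.getVert_zero, hc.getVert_endpoint_iff hi] at h
    omega
  exact Or.inl (hc.getVert_injOn ⟨hi0, hi⟩ ⟨hj0, hj⟩ h)

lemma IsCycle.cyclicallyAdjacent_of_mem_getElem_edges (hc : c.IsCycle) {i j : ℕ} (hij : i < j)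
    (hj : j < c.edges.length) {x : V} (hxi : x ∈ c.edges[i]) (hxj : x ∈ c.edges[j]) :
    j = i + 1 ∨ (i = 0 ∧ j + 1 = c.length) := by
  have hlen := c.length_edges
  rw [getElem_edges, Sym2.mem_iff] at hxi hxj
  rcases hxi with rfl | rfl <;> rcases hxj with h | h <;>
    rcases (hc.getVert_eq_getVert_iff (by omega) (by omega)).mp h with h | h | h <;> omega

end Walk

namespace IsAltCycle

variable {u : V} {c : G.Walk u u} {M : Set (Sym2 V)}

lemma getElem_edges_mem_iff (h : G.IsAltCycle M c) {i j : ℕ} (hi : i < c.edges.length)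
    (hj : j < c.edges.length) (hij : j = i + 1 ∨ (i = 0 ∧ j + 1 = c.length)) :
    c.edges[i] ∈ M ↔ c.edges[j] ∉ M := by
  obtain ⟨-, hchain, hwrap⟩ := h
  rcases hij with rfl | ⟨rfl, hlast⟩
  · exact List.isChain_iff_getElem.mp hchain i hj
  · have hj' : j = c.edges.length - 1 := by rw [c.length_edges]; omega
    subst hj'
    have := hwrap _ _ (List.head?_eq_getElem? ▸ List.getElem?_eq_getElem hi)
      (List.getLast?_eq_getElem? ▸ List.getElem?_eq_getElem hj)
    tauto

lemma exists_mem_edges_notMem (h : G.IsAltCycle M c) : ∃ e ∈ c.edges, e ∉ M := by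
  have h3 := h.1.three_le_length
  have hlen := c.length_edges
  have halt := h.getElem_edges_mem_iff (i := 0) (j := c.length - 1) (by omega) (by omega)
    (Or.inr ⟨rfl, by omega⟩)
  by_cases h0 : c.edges[0] ∈ M
  · exact ⟨_, List.getElem_mem _, halt.mp h0⟩
  · exact ⟨_, List.getElem_mem _, h0⟩

lemma isAlternating {M : G.Subgraph} (h : G.IsAltCycle M.edgeSet c) :
    c.toSubgraph.spanningCoe.IsAlternating M.spanningCoe := by
  intro x w w' hne hw hw'
  simp only [Subgraph.spanningCoe_adj, Walk.adj_toSubgraph_iff_mem_edges] at hw hw'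
  simp only [Subgraph.spanningCoe_adj, ← Subgraph.mem_edgeSet]
  obtain ⟨i, hi, hei⟩ := List.getElem_of_mem hw
  obtain ⟨j, hj, hej⟩ := List.getElem_of_mem hw'
  have hxi : x ∈ c.edges[i] := hei ▸ Sym2.mem_mk_left x w
  have hxj : x ∈ c.edges[j] := hej ▸ Sym2.mem_mk_left x w'
  rw [← hei, ← hej]
  rcases lt_trichotomy i j with hlt | rfl | hlt
  · exact h.getElem_edges_mem_iff hi hj
      (h.1.cyclicallyAdjacent_of_mem_getElem_edges hlt hj hxi hxj)
  · exact absurd (Sym2.congr_right.mp (hei.symm.trans hej)) hne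
  · have := h.getElem_edges_mem_iff hj hi
      (h.1.cyclicallyAdjacent_of_mem_getElem_edges hlt hi hxj hxi)
    tauto

end IsAltCycle

namespace Subgraph.IsPerfectMatching

variable {M : G.Subgraph}

lemma exists_edgeSet_eq_symmDiff (hM : M.IsPerfectMatching) {H : SimpleGraph V} (hHG : H ≤ G)
    (halt : H.IsAlternating M.spanningCoe) (hcyc : H.IsCycles) :
    ∃ N : G.Subgraph, N.IsPerfectMatching ∧ N.edgeSet = M.edgeSet ∆ H.edgeSet := by
  have hle : M.spanningCoe ∆ H ≤ G := by
    rw [symmDiff_def]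
    exact sup_le (sdiff_le.trans M.spanningCoe_le) (sdiff_le.trans hHG)
  -- `symmDiff_of_isAlternating` yields `⊤ : Subgraph (M.spanningCoe ∆ H)`; move it into `G`.
  refine ⟨G.toSubgraph _ hle,
    (toSubgraph_iff (M := ⊤) hle).mpr (hM.symmDiff_of_isAlternating halt hcyc), ?_⟩
  ext e
  induction e with
  | _ x y => simp [symmDiff_def]

lemma eq_of_edgeSet_subset_s9 (hM : M.IsPerfectMatching) {N : G.Subgraph} (hN : N.IsPerfectMatching)
    (h : N.edgeSet ⊆ M.edgeSet) : N = M := by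
  refine IsMatching.injOn_edgeSet hN.1 hM.1 (h.antisymm fun e he => ?_)
  induction e with
  | _ x y =>
    obtain ⟨w, hxw, -⟩ := hN.1 (hN.2 x)
    have hMxw : M.Adj x w := h (Subgraph.mem_edgeSet.mpr hxw)
    obtain rfl := hM.1.eq_of_adj_left hMxw (Subgraph.mem_edgeSet.mp he)
    exact Subgraph.mem_edgeSet.mpr hxw

end Subgraph.IsPerfectMatching

namespace IsAntiForcingSet

variable {M : G.Subgraph} {S : Set (Sym2 V)}

lemma exists_mem_edges_of_isAltCycle (hM : M.IsPerfectMatching) (hS : G.IsAntiForcingSet M S)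
    {u : V} {c : G.Walk u u} (hc : G.IsAltCycle M.edgeSet c) : ∃ e ∈ c.edges, e ∈ S := by
  by_contra! hcS
  obtain ⟨N, hN, hNe⟩ := hM.exists_edgeSet_eq_symmDiff c.toSubgraph.spanningCoe_le
    hc.isAlternating hc.1.isCycles_spanningCoe_toSubgraph
  rw [Subgraph.edgeSet_spanningCoe, Walk.edgeSet_toSubgraph] at hNe
  have hNM : N = M := by
    refine hS.2 N hN (Set.disjoint_left.mpr fun e he heS => ?_)
    rcases Set.symmDiff_subset_union (hNe ▸ he) with heM | hec
    · exact (hS.1 heS).2 heM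
    · exact hcS e hec heS
  obtain ⟨e, hec, heM⟩ := hc.exists_mem_edges_notMem
  have heN : e ∈ N.edgeSet := hNe ▸ Or.inr ⟨hec, heM⟩
  exact heM (hNM ▸ heN)

lemma le_ncard_of_compatible [Finite V] (hM : M.IsPerfectMatching) (hS : G.IsAntiForcingSet M S)
    {n : ℕ} {f : Fin n → Σ v : V, G.Walk v v} (halt : ∀ i, G.IsAltCycle M.edgeSet (f i).2)
    (hcompat : ∀ i j, i ≠ j → G.CompatCycles M.edgeSet (f i).2 (f j).2) : n ≤ S.ncard := by
  choose e he heS using fun i => hS.exists_mem_edges_of_isAltCycle hM (halt i)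
  have hinj : Function.Injective fun i => (⟨e i, heS i⟩ : S) := by
    intro i j hij
    by_contra hne
    have heij : e i = e j := congrArg Subtype.val hij
    have heM : e i ∈ M.edgeSet := (hcompat i j hne).1 _ (he i) (heij ▸ he j)
    exact (hS.1 (heS i)).2 heM
  simpa [Nat.card_coe_set_eq] using Nat.card_le_card_of_injective _ hinj

end IsAntiForcingSet

lemma isAntiForcingSet_edgeSet_sdiff {M : G.Subgraph} (hM : M.IsPerfectMatching) :
    G.IsAntiForcingSet M (G.edgeSet \ M.edgeSet) :=
  ⟨subset_rfl, fun N hN hdisj => hM.eq_of_edgeSet_subset_s9 hN fun _ he =>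
    by_contra fun heM => Set.disjoint_left.mp hdisj he ⟨N.edgeSet_subset he, heM⟩⟩

lemma exists_isAntiForcingSet_ncard_eq {M : G.Subgraph} (hM : M.IsPerfectMatching) :
    ∃ S, G.IsAntiForcingSet M S ∧ S.ncard = G.antiForcingNum M :=
  Nat.sInf_mem (s := {n | ∃ S, G.IsAntiForcingSet M S ∧ S.ncard = n})
    ⟨_, _, isAntiForcingSet_edgeSet_sdiff hM, rfl⟩

end SimpleGraph

/-- For any perfect matching `M` of `G`, `af(G,M) ≥ c'(M)`. -/
theorem antiForcingNum_ge_compatNum (G : SimpleGraph V) [Fintype V]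
    (M : G.Subgraph) (hM : M.IsPerfectMatching) :
    G.compatNum M ≤ G.antiForcingNum M := by
  obtain ⟨S, hS, hcard⟩ := exists_isAntiForcingSet_ncard_eq hM
  rw [← hcard]
  refine csSup_le ⟨0, fun i => i.elim0, fun i => i.elim0, fun i => i.elim0⟩ ?_
  rintro n ⟨f, halt, hcompat⟩
  exact hS.le_ncard_of_compatible hM halt hcompat
end
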